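/- arXiv:2105.03941 — 2 statements merged into one kernel-verified Lean document; each statement's English description precedes it below -/
import Mathlib

section
/- The output of the single-entry randomized response mechanism, divided by MF, is an unbiased estimator of the input: E[Φ(x)] = MF · x, equivalently E[Φ(x)/(MF)] = x, for all x ∈ [-1,1]. -/
theorem rr_unbiased (ε : ℝ) (hε : 0 < ε) (M F : ℕ) (hM : 0 < M) (hF : 0 < F)
    (B : ℝ) (hB : B = (Real.exp ε + 1) / (Real.exp ε - 1) * (M * F)) :
    ∀ x ∈ Set.Icc (-1 : ℝ) 1,
      ((x * (Real.exp ε - 1) + Real.exp ε + 1) / (2 * Real.exp ε + 2)) * B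
        + (1 - (x * (Real.exp ε - 1) + Real.exp ε + 1) / (2 * Real.exp ε + 2)) * (-B)
        = (M * F : ℝ) * x := by
  intro x _
  have h1 : Real.exp ε - 1 ≠ 0 := by
    have := Real.exp_lt_exp.mpr hε
    simp only [Real.exp_zero] at this; linarith
  have h2 : 2 * Real.exp ε + 2 ≠ 0 := by positivity
  subst hB
  field_simp
  ring
end

section
/- For the full-matrix mechanism of Algorithm 1 (uniformly sampling one of MF entries and applying the randomized response to that entry, outputting a matrix that is zero except at the sampled entry): this mechanism satisfies ε-local differential privacy with respect to arbitrary changes of the input matrix with entries in [-1,1]. -/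
open Classical in
/-- Probability that Algorithm 1 (sample one of the `M*F` entries uniformly, apply binary
randomized response to it) outputs the matrix `Y` on input matrix `G`. -/
noncomputable def alg1Prob (ε : ℝ) (M F : ℕ) (B : ℝ)
    (G Y : Fin M → Fin F → ℝ) : ℝ :=
  ∑ i : Fin M, ∑ f : Fin F, (1 / (M * F : ℝ)) *
    (((G i f * (Real.exp ε - 1) + Real.exp ε + 1) / (2 * Real.exp ε + 2)) *
        (if Y = (fun i' f' => if i' = i ∧ f' = f then B else 0) then 1 else 0)
      + (1 - (G i f * (Real.exp ε - 1) + Real.exp ε + 1) / (2 * Real.exp ε + 2)) *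
        (if Y = (fun i' f' => if i' = i ∧ f' = f then -B else 0) then 1 else 0))

theorem alg1_ldp (ε : ℝ) (hε : 0 < ε) (M F : ℕ) (hM : 0 < M) (hF : 0 < F)
    (B : ℝ) (hB : B = (Real.exp ε + 1) / (Real.exp ε - 1) * (M * F)) :
    ∀ G G' : Fin M → Fin F → ℝ,
      (∀ i f, G i f ∈ Set.Icc (-1 : ℝ) 1) → (∀ i f, G' i f ∈ Set.Icc (-1 : ℝ) 1) →
      ∀ Y : Fin M → Fin F → ℝ,
        alg1Prob ε M F B G Y ≤ Real.exp ε * alg1Prob ε M F B G' Y := by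
  intro G G' hG hG' Y
  unfold alg1Prob
  rw [Finset.mul_sum]
  apply Finset.sum_le_sum
  intro i _
  rw [Finset.mul_sum]
  apply Finset.sum_le_sum
  intro f _
  have hE : (1:ℝ) < Real.exp ε := by
    rw [← Real.exp_zero]; exact Real.exp_lt_exp.mpr hε
  set E := Real.exp ε with hEdef
  have hden : (0:ℝ) < 2 * E + 2 := by linarith
  obtain ⟨h1, h2⟩ := hG i f
  obtain ⟨h1', h2'⟩ := hG' i f
  set a : ℝ := (if Y = (fun i' f' => if i' = i ∧ f' = f then B else 0) then (1:ℝ) else 0) with ha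
  set b : ℝ := (if Y = (fun i' f' => if i' = i ∧ f' = f then -B else 0) then (1:ℝ) else 0) with hb
  have ha0 : 0 ≤ a := by rw [ha]; positivity
  have hb0 : 0 ≤ b := by rw [hb]; positivity
  set p : ℝ := (G i f * (E - 1) + E + 1) / (2 * E + 2) with hp
  set p' : ℝ := (G' i f * (E - 1) + E + 1) / (2 * E + 2) with hp'
  have hE0 : (0:ℝ) ≤ E := by linarith
  have hE1 : (0:ℝ) ≤ E - 1 := by linarith
  have hpp : p ≤ E * p' := by
    rw [hp, hp', ← mul_div_assoc, div_le_div_iff_of_pos_right hden]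
    nlinarith [mul_nonneg (mul_nonneg hE0 hE1) (by linarith : (0:ℝ) ≤ G' i f + 1),
      mul_nonneg hE1 (by linarith : (0:ℝ) ≤ 1 - G i f)]
  have hqq : 1 - p ≤ E * (1 - p') := by
    have h1p : 1 - p = (E + 1 - G i f * (E - 1)) / (2 * E + 2) := by
      rw [hp]; field_simp; ring
    have h1p' : 1 - p' = (E + 1 - G' i f * (E - 1)) / (2 * E + 2) := by
      rw [hp']; field_simp; ring
    rw [h1p, h1p', ← mul_div_assoc, div_le_div_iff_of_pos_right hden]
    nlinarith [mul_nonneg (mul_nonneg hE0 hE1) (by linarith : (0:ℝ) ≤ 1 - G' i f),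
      mul_nonneg hE1 (by linarith : (0:ℝ) ≤ 1 + G i f)]
  have hc : (0:ℝ) ≤ 1 / (M * F : ℝ) := by positivity
  have key : p * a + (1 - p) * b ≤ E * (p' * a + (1 - p') * b) := by
    have t1 : p * a ≤ E * p' * a := mul_le_mul_of_nonneg_right hpp ha0
    have t2 : (1 - p) * b ≤ E * (1 - p') * b := mul_le_mul_of_nonneg_right hqq hb0
    nlinarith [t1, t2]
  calc 1 / (M * F : ℝ) * (p * a + (1 - p) * b)
      ≤ 1 / (M * F : ℝ) * (E * (p' * a + (1 - p') * b)) :=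
        mul_le_mul_of_nonneg_left key hc
    _ = E * (1 / (M * F : ℝ) * (p' * a + (1 - p') * b)) := by ring
end
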